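/- arXiv:1509.06926 — 3 statements merged into one kernel-verified Lean document; each statement's English description precedes it below -/
import Mathlib

section
/- Let y ∈ C^1([a,b]) and let a = t_0 < t_1 < ⋯ < t_n = b be a partition of [a,b] with mesh size h = max{t_{j+1} − t_j : j = 0,…,n−1}. Then there exists a cubic spline s with knots t_0,…,t_n such that sup_{t∈[a,b]} |y(t) − s(t)| ≤ 2 h · sup_{t∈[a,b]} |y'(t)|. -/
open Set

noncomputable def csaGlue (t : ℕ → ℝ) (f : ℕ → ℝ → ℝ) : ℕ → ℝ → ℝ :=
  fun K => Nat.rec (f 0) (fun k g => fun x => if x ≤ t (k+1) then g x else f (k+1) x) K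

lemma csaGlue_zero (t : ℕ → ℝ) (f : ℕ → ℝ → ℝ) : csaGlue t f 0 = f 0 := rfl

lemma csaGlue_succ (t : ℕ → ℝ) (f : ℕ → ℝ → ℝ) (k : ℕ) :
    csaGlue t f (k+1) = fun x => if x ≤ t (k+1) then csaGlue t f k x else f (k+1) x := rfl

lemma csaGlue_eval (t : ℕ → ℝ) (f : ℕ → ℝ → ℝ) (K : ℕ)
    (hagree : ∀ i < K, f i (t (i+1)) = f (i+1) (t (i+1)))
    (hmono : ∀ i j, i ≤ j → j ≤ K + 1 → t i ≤ t j) :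
    ∀ j ≤ K, ∀ x, t j ≤ x → x ≤ t (j+1) → csaGlue t f K x = f j x := by
  induction K with
  | zero =>
    intro j hj x _ _
    interval_cases j
    simp [csaGlue_zero]
  | succ K ih =>
    intro j hj x hx1 hx2
    rcases Nat.lt_or_ge j (K+1) with hjK | hjK
    · have hjK' : j ≤ K := Nat.lt_succ_iff.mp hjK
      have hxle : x ≤ t (K+1) := le_trans hx2 (hmono (j+1) (K+1) (by omega) (by omega))
      rw [csaGlue_succ]; simp only []; rw [if_pos hxle]
      exact ih (fun i hi => hagree i (by omega)) (fun i j hij hj => hmono i j hij (by omega))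
        j hjK' x hx1 hx2
    · have hj' : j = K + 1 := le_antisymm hj hjK
      subst hj'
      by_cases hxle : x ≤ t (K+1)
      · have hxeq : x = t (K+1) := le_antisymm hxle hx1
        rw [csaGlue_succ]; simp only []; rw [if_pos hxle, hxeq]
        have := ih (fun i hi => hagree i (by omega)) (fun i j hij hj => hmono i j hij (by omega))
          K le_rfl (t (K+1)) (hmono K (K+1) (by omega) (by omega)) le_rfl
        rw [this]
        exact hagree K (by omega)
      · rw [csaGlue_succ]; simp only []; rw [if_neg hxle]

lemma csaGlue_continuous (t : ℕ → ℝ) (f : ℕ → ℝ → ℝ) (K : ℕ)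
    (hf : ∀ k ≤ K, Continuous (f k))
    (hagree : ∀ i < K, f i (t (i+1)) = f (i+1) (t (i+1)))
    (hmono : ∀ i j, i ≤ j → j ≤ K + 1 → t i ≤ t j) :
    Continuous (csaGlue t f K) := by
  induction K with
  | zero => exact hf 0 le_rfl
  | succ K ih =>
    have hK : Continuous (csaGlue t f K) :=
      ih (fun k hk => hf k (by omega)) (fun i hi => hagree i (by omega))
        (fun i j hij hj => hmono i j hij (by omega))
    rw [csaGlue_succ]
    apply Continuous.if_le hK (hf (K+1) le_rfl) continuous_id continuous_const
    intro x hx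
    subst hx
    rw [csaGlue_eval t f K (fun i hi => hagree i (by omega))
      (fun i j hij hj => hmono i j hij (by omega)) K le_rfl (t (K+1))
      (hmono K (K+1) (by omega) (by omega)) le_rfl]
    exact hagree K (by omega)

/-- Two affine functions agreeing at two distinct points agree everywhere. -/
lemma csaAffine_eq (c d c' d' u v : ℝ) (huv : u ≠ v)
    (h1 : c + d * u = c' + d' * u) (h2 : c + d * v = c' + d' * v) :
    ∀ x, c + d * x = c' + d' * x := by
  have hd : d = d' := by
    have hsub : (d - d') * (u - v) = 0 := by linarith
    rcases mul_eq_zero.mp hsub with h | h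
    · linarith
    · exact absurd (by linarith : u = v) huv
  subst hd
  intro x
  have : c = c' := by linarith
  linarith


lemma csaQuadLe (M d0 d1 m u : ℝ)
    (hd0 : |d0| ≤ 3*M) (hd1 : |d1| ≤ 3*M) (hm : |m| ≤ M)
    (hu0 : 0 ≤ u) (hu1 : u ≤ 1) :
    d0*(1-4*u+3*u^2) + d1*(3*u^2-2*u) + m*(6*u-6*u^2) ≤ 3*M := by
  obtain ⟨hd0l, hd0r⟩ := abs_le.mp hd0
  obtain ⟨hd1l, hd1r⟩ := abs_le.mp hd1
  obtain ⟨hml, hmr⟩ := abs_le.mp hm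
  rcases le_or_gt u (1/3) with h1 | h1
  · nlinarith [mul_nonneg (mul_nonneg (sub_nonneg.mpr hu1) (by linarith : (0:ℝ) ≤ 1 - 3*u)) (by linarith : 0 ≤ 3*M - d0),
      mul_nonneg (mul_nonneg hu0 (by linarith : (0:ℝ) ≤ 2 - 3*u)) (by linarith : 0 ≤ 3*M + d1),
      mul_nonneg (mul_nonneg hu0 (sub_nonneg.mpr hu1)) (by linarith : 0 ≤ M - m),
      mul_nonneg hu0 hu0]
  · rcases le_or_gt u (2/3) with h2 | h2
    · nlinarith [mul_nonneg (mul_nonneg (sub_nonneg.mpr hu1) (by linarith : (0:ℝ) ≤ 3*u - 1)) (by linarith : 0 ≤ 3*M + d0),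
        mul_nonneg (mul_nonneg hu0 (by linarith : (0:ℝ) ≤ 2 - 3*u)) (by linarith : 0 ≤ 3*M + d1),
        mul_nonneg (mul_nonneg hu0 (sub_nonneg.mpr hu1)) (by linarith : 0 ≤ M - m),
        sq_nonneg (1 - 2*u), mul_nonneg (by linarith : (0:ℝ) ≤ M) (sq_nonneg (1-2*u))]
    · nlinarith [mul_nonneg (mul_nonneg (sub_nonneg.mpr hu1) (by linarith : (0:ℝ) ≤ 3*u - 1)) (by linarith : 0 ≤ 3*M + d0),
        mul_nonneg (mul_nonneg hu0 (by linarith : (0:ℝ) ≤ 3*u - 2)) (by linarith : 0 ≤ 3*M - d1),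
        mul_nonneg (mul_nonneg hu0 (sub_nonneg.mpr hu1)) (by linarith : 0 ≤ M - m),
        mul_nonneg (sub_nonneg.mpr hu1) (sub_nonneg.mpr hu1)]

lemma csaQuadBound (M d0 d1 m u : ℝ)
    (hd0 : |d0| ≤ 3*M) (hd1 : |d1| ≤ 3*M) (hm : |m| ≤ M)
    (hu0 : 0 ≤ u) (hu1 : u ≤ 1) :
    |d0*(1-4*u+3*u^2) + d1*(3*u^2-2*u) + m*(6*u-6*u^2)| ≤ 3*M := by
  rw [abs_le]
  constructor
  · have := csaQuadLe M (-d0) (-d1) (-m) u (by rwa [abs_neg]) (by rwa [abs_neg]) (by rwa [abs_neg]) hu0 hu1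
    linarith
  · exact csaQuadLe M d0 d1 m u hd0 hd1 hm hu0 hu1


lemma csaQprimeBound (M d0 d1 m L z : ℝ) (hL : 0 < L) (hz0 : 0 ≤ z) (hzL : z ≤ L)
    (hd0 : |d0| ≤ 3*M) (hd1 : |d1| ≤ 3*M) (hm : |m| ≤ M) :
    |d0 + 2*((3*m - 2*d0 - d1)/L)*z + 3*((d0 + d1 - 2*m)/L^2)*z^2| ≤ 3*M := by
  set u : ℝ := z / L with hu
  have hu0 : 0 ≤ u := div_nonneg hz0 hL.le
  have hu1 : u ≤ 1 := (div_le_one hL).mpr hzL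
  have hz : z = u * L := by rw [hu, div_mul_cancel₀ z hL.ne']
  have key : d0 + 2*((3*m - 2*d0 - d1)/L)*z + 3*((d0 + d1 - 2*m)/L^2)*z^2
      = d0*(1-4*u+3*u^2) + d1*(3*u^2-2*u) + m*(6*u-6*u^2) := by
    rw [hz]; field_simp; ring
  rw [key]
  exact csaQuadBound M d0 d1 m u hd0 hd1 hm hu0 hu1

lemma csaCover (t : ℕ → ℝ) : ∀ n, 0 < n → (∀ i j, i ≤ j → j ≤ n → t i ≤ t j) →
    ∀ x, t 0 ≤ x → x ≤ t n → ∃ k, k < n ∧ t k ≤ x ∧ x ≤ t (k+1) := by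
  intro n
  induction n with
  | zero => omega
  | succ N ih =>
    intro _ hmono x hx0 hxn
    rcases Nat.eq_zero_or_pos N with hN | hN
    · subst hN; exact ⟨0, by omega, hx0, hxn⟩
    · by_cases hxle : x ≤ t N
      · obtain ⟨k, hk, h1, h2⟩ := ih hN (fun i j hij hj => hmono i j hij (by omega)) x hx0 hxle
        exact ⟨k, by omega, h1, h2⟩
      · exact ⟨N, by omega, (le_of_not_ge hxle), hxn⟩

lemma csaCubicDeriv (Y D A B T : ℝ) (x : ℝ) :
    HasDerivAt (fun z => Y + D*(z-T) + A*(z-T)^2 + B*(z-T)^3)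
      (D + 2*A*(x-T) + 3*B*(x-T)^2) x := by
  have h : HasDerivAt (fun z : ℝ => z - T) 1 x := (hasDerivAt_id x).sub_const T
  have h1 : HasDerivAt (fun z : ℝ => Y + D*(z-T)) D x := by
    simpa using ((h.const_mul D).const_add Y)
  have h2 : HasDerivAt (fun z : ℝ => A*(z-T)^2) (2*A*(x-T)) x := by
    have := (h.pow 2).const_mul A
    simpa using this.congr_deriv (by ring)
  have h3 : HasDerivAt (fun z : ℝ => B*(z-T)^3) (3*B*(x-T)^2) x := by
    have := (h.pow 3).const_mul B
    simpa using this.congr_deriv (by ring)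
  exact (h1.add h2).add h3

lemma csaQuadDeriv (D A B T : ℝ) (x : ℝ) :
    HasDerivAt (fun z => D + 2*A*(z-T) + 3*B*(z-T)^2)
      (2*A + 6*B*(x-T)) x := by
  have h : HasDerivAt (fun z : ℝ => z - T) 1 x := (hasDerivAt_id x).sub_const T
  have h1 : HasDerivAt (fun z : ℝ => D + 2*A*(z-T)) (2*A) x := by
    simpa using ((h.const_mul (2*A)).const_add D)
  have h2 : HasDerivAt (fun z : ℝ => 3*B*(z-T)^2) (6*B*(x-T)) x := by
    have := (h.pow 2).const_mul (3*B)
    simpa using this.congr_deriv (by ring)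
  exact h1.add h2

/-- Max principle for the tridiagonal spline system. -/
lemma csaMaxPrinciple (n : ℕ) (L : ℕ → ℝ) (hL : ∀ k < n, 0 < L k)
    (e r : ℕ → ℝ) (B : ℝ) (hB : 0 ≤ B)
    (h0 : |e 0| ≤ B) (hnn : |e n| ≤ B)
    (heq : ∀ k, 0 < k → k < n →
      L k * e (k-1) + 2*(L (k-1) + L k) * e k + L (k-1) * e (k+1) = r k)
    (hr : ∀ k, 0 < k → k < n → |r k| ≤ 3*(L (k-1) + L k) * B) :
    ∀ k ≤ n, |e k| ≤ 3*B := by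
  obtain ⟨k0, hk0mem, hmax⟩ := Finset.exists_max_image (Finset.range (n+1))
    (fun k => |e k|) ⟨0, by simp⟩
  have hk0n : k0 ≤ n := by simpa [Nat.lt_succ_iff] using hk0mem
  have key : |e k0| ≤ 3*B := by
    rcases Nat.eq_zero_or_pos k0 with h | hpos
    · subst h; linarith
    rcases eq_or_lt_of_le hk0n with h | hlt
    · subst h; linarith
    · have hL1 : 0 < L (k0-1) := hL _ (by omega)
      have hL2 : 0 < L k0 := hL _ hlt
      have he1 : |e (k0-1)| ≤ |e k0| := hmax _ (by simp; omega)
      have he2 : |e (k0+1)| ≤ |e k0| := hmax _ (by simp; omega)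
      have heqk := heq k0 hpos hlt
      have habs : 2*(L (k0-1) + L k0) * |e k0|
          ≤ |r k0| + L k0 * |e (k0-1)| + L (k0-1) * |e (k0+1)| := by
        have : 2*(L (k0-1) + L k0) * e k0 = r k0 - L k0 * e (k0-1) - L (k0-1) * e (k0+1) := by
          linarith
        calc 2*(L (k0-1) + L k0) * |e k0| = |2*(L (k0-1) + L k0) * e k0| := by
              rw [abs_mul, abs_of_nonneg (by linarith : (0:ℝ) ≤ 2*(L (k0-1) + L k0))]
          _ = |r k0 - L k0 * e (k0-1) - L (k0-1) * e (k0+1)| := by rw [this]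
          _ ≤ |r k0| + |L k0 * e (k0-1)| + |L (k0-1) * e (k0+1)| := by
              exact (abs_sub _ _).trans (by gcongr; exact abs_sub _ _)
          _ = |r k0| + L k0 * |e (k0-1)| + L (k0-1) * |e (k0+1)| := by
              rw [abs_mul, abs_mul, abs_of_pos hL2, abs_of_pos hL1]
      have hrk := hr k0 hpos hlt
      nlinarith [abs_nonneg (e k0)]
  intro k hk
  exact le_trans (hmax k (by simp; omega)) key

lemma csaSlopes (n : ℕ) (hn : 0 < n) (L : ℕ → ℝ) (hL : ∀ k < n, 0 < L k)
    (m : ℕ → ℝ) (M : ℝ) (hm : ∀ k < n, |m k| ≤ M) :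
    ∃ d : ℕ → ℝ, d 0 = m 0 ∧ d n = m (n-1) ∧
      (∀ k, 0 < k → k < n →
        L k * d (k-1) + 2*(L (k-1) + L k) * d k + L (k-1) * d (k+1)
          = 3*(L k * m (k-1) + L (k-1) * m k)) ∧
      (∀ k, k ≤ n → |d k| ≤ 3*M) := by
  have hM : 0 ≤ M := le_trans (abs_nonneg _) (hm 0 hn)
  set G : (Fin (n+1) → ℝ) →ₗ[ℝ] (Fin (n+1) → ℝ) :=
    { toFun := fun D j =>
        if h0 : (j:ℕ) = 0 then D 0
        else if hn' : (j:ℕ) = n then D (Fin.last n)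
        else L (j:ℕ) * D ⟨(j:ℕ)-1, by omega⟩
          + 2*(L ((j:ℕ)-1) + L (j:ℕ)) * D j
          + L ((j:ℕ)-1) * D ⟨(j:ℕ)+1, by have := j.isLt; omega⟩
      map_add' := by
        intro D E; funext j; simp only [Pi.add_apply]
        split_ifs <;> ring
      map_smul' := by
        intro c D; funext j
        simp only [Pi.smul_apply, smul_eq_mul, RingHom.id_apply]
        split_ifs <;> ring }
  have hGapp : ∀ (D : Fin (n+1) → ℝ) (j : Fin (n+1)), G D j =
        if h0 : (j:ℕ) = 0 then D 0
        else if hn' : (j:ℕ) = n then D (Fin.last n)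
        else L (j:ℕ) * D ⟨(j:ℕ)-1, by omega⟩
          + 2*(L ((j:ℕ)-1) + L (j:ℕ)) * D j
          + L ((j:ℕ)-1) * D ⟨(j:ℕ)+1, by have := j.isLt; omega⟩ := fun D j => rfl
  -- generic translation of `G D = R` into equations on the ℕ-indexed extension
  have htrans : ∀ (D R : Fin (n+1) → ℝ), G D = R →
      ∀ (e ρ : ℕ → ℝ), (∀ k (hk : k < n+1), e k = D ⟨k, hk⟩) →
        (∀ k (hk : k < n+1), ρ k = R ⟨k, hk⟩) →
      (e 0 = ρ 0 ∧ e n = ρ n ∧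
        ∀ k, 0 < k → k < n →
          L k * e (k-1) + 2*(L (k-1) + L k) * e k + L (k-1) * e (k+1) = ρ k) := by
    intro D R hDR e ρ heD hρR
    have happ : ∀ j : Fin (n+1), G D j = R j := fun j => congrFun hDR j
    refine ⟨?_, ?_, ?_⟩
    · have := happ ⟨0, by omega⟩
      rw [hGapp] at this
      rw [heD 0 (by omega), hρR 0 (by omega)]
      simpa using this
    · have := happ ⟨n, by omega⟩
      rw [hGapp] at this
      rw [heD n (by omega), hρR n (by omega)]
      rcases Nat.eq_zero_or_pos n with h | h
      · subst h; simpa using this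
      · rw [dif_neg (by omega : ¬ (n = 0)), dif_pos rfl] at this
        exact this
    · intro k hk0 hkn
      have := happ ⟨k, by omega⟩
      rw [hGapp] at this
      simp only [dif_neg (by omega : ¬ (k = 0)), dif_neg (by omega : ¬ (k = n))] at this
      rw [heD (k-1) (by omega), heD k (by omega), heD (k+1) (by omega), hρR k (by omega)]
      exact this
  have hinj : Function.Injective G := by
    rw [← LinearMap.ker_eq_bot, LinearMap.ker_eq_bot']
    intro D hD
    set e : ℕ → ℝ := fun k => if hk : k < n+1 then D ⟨k, hk⟩ else 0 with he
    have heD : ∀ k (hk : k < n+1), e k = D ⟨k, hk⟩ := by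
      intro k hk; simp only [he, dif_pos hk]
    obtain ⟨h1, h2, h3⟩ := htrans D 0 hD e (fun _ => 0) heD (fun k hk => rfl)
    have hek : ∀ k ≤ n, |e k| ≤ 3*0 :=
      csaMaxPrinciple n L hL e (fun _ => 0) 0 le_rfl
        (by rw [h1]; simp) (by rw [h2]; simp) h3 (by simp)
    funext j
    have : |e (j:ℕ)| ≤ 0 := by simpa using hek (j:ℕ) (by have := j.isLt; omega)
    have : e (j:ℕ) = 0 := abs_nonpos_iff.mp this
    rw [heD (j:ℕ) j.isLt] at this
    simpa using this
  have hsurj : Function.Surjective G := LinearMap.injective_iff_surjective.mp hinj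
  set R : Fin (n+1) → ℝ := fun j =>
    if (j:ℕ) = 0 then m 0 else if (j:ℕ) = n then m (n-1)
    else 3*(L (j:ℕ) * m ((j:ℕ)-1) + L ((j:ℕ)-1) * m (j:ℕ)) with hR
  obtain ⟨D, hD⟩ := hsurj R
  set d : ℕ → ℝ := fun k => if hk : k < n+1 then D ⟨k, hk⟩ else 0 with hd
  have hdD : ∀ k (hk : k < n+1), d k = D ⟨k, hk⟩ := by
    intro k hk; simp only [hd, dif_pos hk]
  set ρ : ℕ → ℝ := fun k =>
    if k = 0 then m 0 else if k = n then m (n-1)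
    else 3*(L k * m (k-1) + L (k-1) * m k) with hρ
  have hρR : ∀ k (hk : k < n+1), ρ k = R ⟨k, hk⟩ := fun k hk => rfl
  obtain ⟨h1, h2, h3⟩ := htrans D R hD d ρ hdD hρR
  have hd0 : d 0 = m 0 := by rw [h1]; simp [hρ]
  have hdn : d n = m (n-1) := by
    rw [h2, hρ]
    rcases Nat.eq_zero_or_pos n with h | h
    · exfalso; omega
    · simp only [if_neg (by omega : ¬ n = 0), if_pos rfl]; simp
  have heqs : ∀ k, 0 < k → k < n →
      L k * d (k-1) + 2*(L (k-1) + L k) * d k + L (k-1) * d (k+1)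
        = 3*(L k * m (k-1) + L (k-1) * m k) := by
    intro k hk0 hkn
    rw [h3 k hk0 hkn, hρ]
    simp only [if_neg (by omega : ¬ k = 0), if_neg (by omega : ¬ k = n)]
  refine ⟨d, hd0, hdn, heqs, ?_⟩
  apply csaMaxPrinciple n L hL d ρ M hM
  · rw [hd0]; exact hm 0 hn
  · rw [hdn]; exact hm (n-1) (by omega)
  · exact h3
  · intro k hk0 hkn
    rw [hρ]
    simp only [if_neg (by omega : ¬ k = 0), if_neg (by omega : ¬ k = n)]
    have hL1 : 0 < L (k-1) := hL _ (by omega)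
    have hL2 : 0 < L k := hL _ hkn
    have hm1 : |m (k-1)| ≤ M := hm _ (by omega)
    have hm2 : |m k| ≤ M := hm _ hkn
    calc |3*(L k * m (k-1) + L (k-1) * m k)|
        = 3*|L k * m (k-1) + L (k-1) * m k| := by
          rw [abs_mul]; norm_num
      _ ≤ 3*(|L k * m (k-1)| + |L (k-1) * m k|) := by
          have := abs_add_le (L k * m (k-1)) (L (k-1) * m k); linarith
      _ = 3*(L k * |m (k-1)| + L (k-1) * |m k|) := by
          rw [abs_mul, abs_mul, abs_of_pos hL2, abs_of_pos hL1]
      _ ≤ 3*(L (k-1) + L k) * M := by nlinarith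

/-- spline approximation error bound `2 h ⋅ sup |y'|` for `y ∈ C¹([a,b])`. -/
theorem cubic_spline_approximation_error_C1
    (a b : ℝ) (n : ℕ) (hn : 0 < n) (t : ℕ → ℝ)
    (ht0 : t 0 = a) (htn : t n = b)
    (htmono : ∀ k, k < n → t k < t (k + 1))
    (y : ℝ → ℝ) (hy : ContDiffOn ℝ 1 y (Icc a b))
    (h : ℝ)
    (hh : h = (Finset.range n).sup'
      (Finset.nonempty_range_iff.mpr hn.ne') (fun k => t (k + 1) - t k)) :
    ∃ s : ℝ → ℝ,
      (ContDiffOn ℝ 2 s (Icc a b) ∧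
        ∀ k < n, ∃ p : Polynomial ℝ, p.degree ≤ 3 ∧
          ∀ x ∈ Icc (t k) (t (k + 1)), s x = p.eval x) ∧
      ∀ x ∈ Icc a b,
        |y x - s x| ≤ 2 * h * sSup ((fun z => |derivWithin y (Icc a b) z|) '' Icc a b) := by
  classical
  have hstep_pos : ∀ k, k < n → 0 < t (k+1) - t k := fun k hk => sub_pos.mpr (htmono k hk)
  have tmono : ∀ i j, i ≤ j → j ≤ n → t i ≤ t j := by
    intro i j hij hjn
    induction j with
    | zero =>
      have : i = 0 := by omega
      subst this; exact le_rfl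
    | succ J ihJ =>
      rcases Nat.lt_or_ge i (J+1) with hiJ | hiJ
      · exact le_trans (ihJ (by omega) (by omega)) (le_of_lt (htmono J (by omega)))
      · have : i = J + 1 := by omega
        subst this; exact le_rfl
  have hab : a < b := by
    rw [← ht0, ← htn]
    exact lt_of_lt_of_le (htmono 0 hn) (tmono 1 n (by omega) le_rfl)
  have tmem : ∀ k, k ≤ n → t k ∈ Icc a b := fun k hk =>
    ⟨ht0 ▸ tmono 0 k (by omega) hk, htn ▸ tmono k n hk le_rfl⟩
  have hle_h : ∀ k, k < n → t (k+1) - t k ≤ h := by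
    intro k hk; rw [hh]
    exact Finset.le_sup' (fun k => t (k+1) - t k) (Finset.mem_range.mpr hk)
  have hpos : 0 < h := lt_of_lt_of_le (hstep_pos 0 hn) (hle_h 0 hn)
  set M := sSup ((fun z => |derivWithin y (Icc a b) z|) '' Icc a b) with hMdef
  have hycont : ContinuousOn (fun z => |derivWithin y (Icc a b) z|) (Icc a b) :=
    (hy.continuousOn_derivWithin (uniqueDiffOn_Icc hab) le_rfl).abs
  have hbdd : BddAbove ((fun z => |derivWithin y (Icc a b) z|) '' Icc a b) :=
    (isCompact_Icc.image_of_continuousOn hycont).bddAbove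
  have hzM : ∀ z ∈ Icc a b, |derivWithin y (Icc a b) z| ≤ M := fun z hz =>
    le_csSup hbdd ⟨z, hz, rfl⟩
  have hM0 : 0 ≤ M := le_trans (abs_nonneg _) (hzM a (left_mem_Icc.mpr hab.le))
  have hyd : DifferentiableOn ℝ y (Icc a b) := hy.differentiableOn one_ne_zero
  have hylip : ∀ u ∈ Icc a b, ∀ z ∈ Icc a b, |y z - y u| ≤ M * |z - u| := by
    intro u hu z hz
    have := Convex.norm_image_sub_le_of_norm_derivWithin_le hyd
      (fun x hx => by rw [Real.norm_eq_abs]; exact hzM x hx) (convex_Icc a b) hu hz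
    simpa [Real.norm_eq_abs] using this
  set m : ℕ → ℝ := fun k => (y (t (k+1)) - y (t k)) / (t (k+1) - t k) with hmdef
  have hmM : ∀ k, k < n → |m k| ≤ M := by
    intro k hk
    have hp := hstep_pos k hk
    rw [hmdef]
    simp only
    rw [abs_div, abs_of_pos hp, div_le_iff₀ hp]
    have := hylip (t k) (tmem k (by omega)) (t (k+1)) (tmem (k+1) (by omega))
    rwa [abs_of_pos hp] at this
  obtain ⟨d, hd0, hdn, heqs, hdM⟩ :=
    csaSlopes n hn (fun k => t (k+1) - t k) hstep_pos m M hmM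
  set A : ℕ → ℝ := fun k => (3*m k - 2*d k - d (k+1)) / (t (k+1) - t k) with hAdef
  set B : ℕ → ℝ := fun k => (d k + d (k+1) - 2*m k) / (t (k+1) - t k)^2 with hBdef
  set Q : ℕ → ℝ → ℝ := fun k x =>
    y (t k) + d k*(x - t k) + A k*(x - t k)^2 + B k*(x - t k)^3 with hQdef
  set Q1 : ℕ → ℝ → ℝ := fun k x => d k + 2*A k*(x - t k) + 3*B k*(x - t k)^2 with hQ1def
  set Q2 : ℕ → ℝ → ℝ := fun k x => 2*A k + 6*B k*(x - t k) with hQ2def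
  set σ : ℕ → ℝ := fun k => if k < n then (6*m k - 4*d k - 2*d (k+1))/(t (k+1) - t k)
      else (2*d (n-1) + 4*d n - 6*m (n-1))/(t ((n-1)+1) - t (n-1)) with hσdef
  set sl : ℕ → ℝ := fun k => (σ (k+1) - σ k)/(t (k+1) - t k) with hsldef
  set f : ℕ → ℝ → ℝ := fun k x => (σ k - sl k * t k) + sl k * x with hfdef
  set w : ℝ → ℝ := csaGlue t f (n-1) with hwdef
  have hagree : ∀ i, i < n-1 → f i (t (i+1)) = f (i+1) (t (i+1))  := by
    intro i hi
    have hp := hstep_pos i (by omega)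
    rw [hfdef]
    simp only
    rw [hsldef]
    simp only
    field_simp
    ring
  have hfcont : ∀ k, Continuous (f k) := by
    intro k
    rw [hfdef]
    exact continuous_const.add (continuous_const.mul continuous_id)
  have hwcont : Continuous w :=
    csaGlue_continuous t f (n-1) (fun k _ => hfcont k) hagree
      (fun i j hij hj => tmono i j hij (by omega))
  have hweval : ∀ k, k < n → ∀ x, t k ≤ x → x ≤ t (k+1) → w x = f k x := by
    intro k hk x hx1 hx2
    exact csaGlue_eval t f (n-1) hagree (fun i j hij hj => tmono i j hij (by omega))
      k (by omega) x hx1 hx2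
  -- f k agrees with Q2 k on the k-th interval
  have hQ2l : ∀ k, k < n → Q2 k (t k) = σ k := by
    intro k hk
    have hp := hstep_pos k hk
    rw [hQ2def, hσdef]
    simp only [if_pos hk]
    rw [hAdef]
    simp only
    field_simp
    ring
  have hQ2aux : ∀ k, k < n → Q2 k (t (k+1)) = (2*d k + 4*d (k+1) - 6*m k)/(t (k+1) - t k) := by
    intro k hk
    have hp := hstep_pos k hk
    rw [hQ2def, hAdef, hBdef]
    simp only
    field_simp
    ring
  have hQ2r : ∀ k, k < n → Q2 k (t (k+1)) = σ (k+1) := by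
    intro k hk
    rw [hQ2aux k hk, hσdef]
    simp only
    rcases Nat.lt_or_ge (k+1) n with hk1 | hk1
    · rw [if_pos hk1]
      have heq := heqs (k+1) (by omega) hk1
      simp only [Nat.add_sub_cancel] at heq
      have hp1 := hstep_pos k hk
      have hp2 := hstep_pos (k+1) hk1
      rw [div_eq_div_iff hp1.ne' hp2.ne']
      linear_combination 2 * heq
    · rw [if_neg (by omega : ¬ (k+1 < n))]
      have e1 : n - 1 = k := by omega
      have e2 : n = k + 1 := by omega
      rw [e1, e2]
  have hwQ2 : ∀ k, k < n → ∀ x, t k ≤ x → x ≤ t (k+1) → w x = Q2 k x := by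
    intro k hk x hx1 hx2
    rw [hweval k hk x hx1 hx2]
    have hne : t k ≠ t (k+1) := ne_of_lt (htmono k hk)
    have key := csaAffine_eq (σ k - sl k * t k) (sl k)
      (2*A k - 6*B k*t k) (6*B k) (t k) (t (k+1)) hne ?_ ?_
    · have := key x
      rw [hfdef]
      simp only
      rw [this, hQ2def]
      simp only
      ring
    · have h1 : (σ k - sl k * t k) + sl k * t k = σ k := by ring
      rw [h1, ← hQ2l k hk, hQ2def]
      simp only
      ring
    · have h1 : (σ k - sl k * t k) + sl k * t (k+1) = f k (t (k+1)) := by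
        rw [hfdef]
      have h2 : f k (t (k+1)) = σ (k+1) := by
        have hp := hstep_pos k hk
        rw [hfdef]; simp only; rw [hsldef]; simp only; field_simp; ring
      rw [h1, h2, ← hQ2r k hk, hQ2def]
      simp only
      ring
  -- the spline as a double integral
  set v : ℝ → ℝ := fun x => d 0 + ∫ u in a..x, w u with hvdef
  set s : ℝ → ℝ := fun x => y a + ∫ u in a..x, v u with hsdef
  have hvderiv : ∀ x, HasDerivAt v (w x) x := by
    intro x
    rw [hvdef]
    exact (intervalIntegral.integral_hasDerivAt_right (hwcont.intervalIntegrable a x)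
      (hwcont.stronglyMeasurableAtFilter _ _) hwcont.continuousAt).const_add (d 0)
  have hvcont : Continuous v := by
    have : Differentiable ℝ v := fun x => (hvderiv x).differentiableAt
    exact this.continuous
  have hsderiv : ∀ x, HasDerivAt s (v x) x := by
    intro x
    rw [hsdef]
    exact (intervalIntegral.integral_hasDerivAt_right (hvcont.intervalIntegrable a x)
      (hvcont.stronglyMeasurableAtFilter _ _) hvcont.continuousAt).const_add (y a)
  have hscd : ContDiff ℝ 2 s := by
    have hds : deriv s = v := funext fun x => (hsderiv x).deriv
    have hdv : deriv v = w := funext fun x => (hvderiv x).deriv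
    rw [show (2 : WithTop ℕ∞) = (1 + 1 : WithTop ℕ∞) by norm_num, contDiff_succ_iff_deriv]
    refine ⟨fun x => (hsderiv x).differentiableAt, by simp, ?_⟩
    rw [hds, contDiff_one_iff_deriv, hdv]
    exact ⟨fun x => (hvderiv x).differentiableAt, hwcont⟩
  -- the key interval claim
  have claim : ∀ k, k < n → s (t k) = y (t k) → v (t k) = d k →
      ∀ x, t k ≤ x → x ≤ t (k+1) → v x = Q1 k x ∧ s x = Q k x := by
    intro k hk hsk hvk
    have hud := uniqueDiffOn_Icc (htmono k hk)
    have hQ1d : ∀ z : ℝ, HasDerivAt (Q1 k) (Q2 k z) z := by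
      intro z
      rw [hQ1def, hQ2def]
      exact csaQuadDeriv (d k) (A k) (B k) (t k) z
    have hQd : ∀ z : ℝ, HasDerivAt (Q k) (Q1 k z) z := by
      intro z
      rw [hQdef, hQ1def]
      exact csaCubicDeriv (y (t k)) (d k) (A k) (B k) (t k) z
    have hF : ∀ z : ℝ, HasDerivAt (fun x => v x - Q1 k x) (w z - Q2 k z) z :=
      fun z => (hvderiv z).sub (hQ1d z)
    have hFconst : ∀ x ∈ Icc (t k) (t (k+1)), v x - Q1 k x = v (t k) - Q1 k (t k) := by
      apply constant_of_derivWithin_zero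
      · exact fun z _ => ((hF z).differentiableAt).differentiableWithinAt
      · intro z hz
        rw [(hF z).hasDerivWithinAt.derivWithin (hud z (Ico_subset_Icc_self hz))]
        rw [hwQ2 k hk z hz.1 hz.2.le]
        ring
    have hQ1tk : Q1 k (t k) = d k := by rw [hQ1def]; simp
    have hvQ1 : ∀ x ∈ Icc (t k) (t (k+1)), v x = Q1 k x := by
      intro x hx
      have := hFconst x hx
      rw [hvk, hQ1tk] at this
      linarith [this]
    have hG : ∀ z ∈ Icc (t k) (t (k+1)),
        HasDerivAt (fun x => s x - Q k x) (v z - Q1 k z) z :=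
      fun z _ => (hsderiv z).sub (hQd z)
    have hGconst : ∀ x ∈ Icc (t k) (t (k+1)), s x - Q k x = s (t k) - Q k (t k) := by
      apply constant_of_derivWithin_zero
      · exact fun z hz => ((hG z hz).differentiableAt).differentiableWithinAt
      · intro z hz
        rw [(hG z (Ico_subset_Icc_self hz)).hasDerivWithinAt.derivWithin
          (hud z (Ico_subset_Icc_self hz))]
        rw [hvQ1 z (Ico_subset_Icc_self hz)]
        ring
    have hQtk : Q k (t k) = y (t k) := by rw [hQdef]; simp
    intro x hx1 hx2
    refine ⟨hvQ1 x ⟨hx1, hx2⟩, ?_⟩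
    have := hGconst x ⟨hx1, hx2⟩
    rw [hsk, hQtk] at this
    linarith [this]
  -- interpolation at the knots, by induction
  have P : ∀ k, k ≤ n → s (t k) = y (t k) ∧ v (t k) = d k := by
    intro k
    induction k with
    | zero =>
      intro _
      constructor
      · rw [hsdef]; simp [ht0, intervalIntegral.integral_same]
      · rw [hvdef]; simp [ht0, intervalIntegral.integral_same, hd0]
    | succ k ih =>
      intro hk1
      have hk : k < n := by omega
      obtain ⟨hsk, hvk⟩ := ih (by omega)
      obtain ⟨hv1, hs1⟩ := claim k hk hsk hvk (t (k+1)) (htmono k hk).le le_rfl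
      have hp := hstep_pos k hk
      constructor
      · rw [hs1, hQdef]
        simp only
        rw [hAdef, hBdef, hmdef]
        simp only
        field_simp
        ring
      · rw [hv1, hQ1def]
        simp only
        rw [hAdef, hBdef]
        simp only
        field_simp
        ring
  refine ⟨s, ⟨hscd.contDiffOn, ?_⟩, ?_⟩
  · -- piecewise polynomial
    intro k hk
    refine ⟨Polynomial.C (y (t k)) + Polynomial.C (d k) * (Polynomial.X - Polynomial.C (t k))
      + Polynomial.C (A k) * (Polynomial.X - Polynomial.C (t k))^2
      + Polynomial.C (B k) * (Polynomial.X - Polynomial.C (t k))^3, ?_, ?_⟩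
    · compute_degree
    · intro x hx
      obtain ⟨hsk, hvk⟩ := P k (le_of_lt hk)
      rw [(claim k hk hsk hvk x hx.1 hx.2).2, hQdef]
      simp
  · -- error bound
    intro x hx
    obtain ⟨k, hk, hx1, hx2⟩ := csaCover t n hn tmono x (ht0 ▸ hx.1) (htn ▸ hx.2)
    obtain ⟨hsk, hvk⟩ := P k (le_of_lt hk)
    obtain ⟨hsk1, hvk1⟩ := P (k+1) (by omega)
    have hQall := claim k hk hsk hvk
    have hIcsub : Icc (t k) (t (k+1)) ⊆ Icc a b :=
      Icc_subset_Icc (tmem k (by omega)).1 (tmem (k+1) (by omega)).2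
    have hud := uniqueDiffOn_Icc (htmono k hk)
    have hediff : DifferentiableOn ℝ (fun z => y z - s z) (Icc (t k) (t (k+1))) :=
      (hyd.mono hIcsub).sub (fun z _ => (hsderiv z).differentiableAt.differentiableWithinAt)
    have hbound : ∀ z ∈ Icc (t k) (t (k+1)),
        ‖derivWithin (fun z => y z - s z) (Icc (t k) (t (k+1))) z‖ ≤ 4*M := by
      intro z hz
      have hz' : z ∈ Icc a b := hIcsub hz
      have h1 : derivWithin (fun z => y z - s z) (Icc (t k) (t (k+1))) z
          = derivWithin y (Icc (t k) (t (k+1))) z - v z := by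
        rw [show (fun z => y z - s z) = y - s from rfl, derivWithin_sub ((hyd.mono hIcsub) z hz)
          ((hsderiv z).differentiableAt.differentiableWithinAt)]
        congr 1
        exact (hsderiv z).hasDerivWithinAt.derivWithin (hud z hz)
      have h2 : derivWithin y (Icc (t k) (t (k+1))) z = derivWithin y (Icc a b) z :=
        derivWithin_subset hIcsub (hud z hz) (hyd z hz')
      rw [h1, h2, Real.norm_eq_abs]
      have h3 : |v z| ≤ 3*M := by
        rw [(hQall z hz.1 hz.2).1, hQ1def]
        simp only
        rw [hAdef, hBdef]
        simp only
        exact csaQprimeBound M (d k) (d (k+1)) (m k) (t (k+1) - t k) (z - t k)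
          (hstep_pos k hk) (by linarith [hz.1]) (by linarith [hz.2])
          (hdM k (by omega)) (hdM (k+1) (by omega)) (hmM k hk)
      have h4 := hzM z hz'
      calc |derivWithin y (Icc a b) z - v z|
          ≤ |derivWithin y (Icc a b) z| + |v z| := abs_sub _ _
        _ ≤ M + 3*M := by linarith
        _ = 4*M := by ring
    have b1 := Convex.norm_image_sub_le_of_norm_derivWithin_le hediff hbound
      (convex_Icc _ _) (left_mem_Icc.mpr (htmono k hk).le) ⟨hx1, hx2⟩
    have b2 := Convex.norm_image_sub_le_of_norm_derivWithin_le hediff hbound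
      (convex_Icc _ _) (right_mem_Icc.mpr (htmono k hk).le) ⟨hx1, hx2⟩
    simp only [Real.norm_eq_abs] at b1 b2
    have hz1 : y (t k) - s (t k) = 0 := by rw [hsk]; ring
    have hz2 : y (t (k+1)) - s (t (k+1)) = 0 := by rw [hsk1]; ring
    rw [hz1, sub_zero] at b1
    rw [hz2, sub_zero] at b2
    rw [abs_of_nonneg (by linarith : (0:ℝ) ≤ x - t k)] at b1
    rw [abs_of_nonpos (by linarith : x - t (k+1) ≤ 0)] at b2
    have hLh := hle_h k hk
    rcases le_or_gt (x - t k) ((t (k+1) - t k)/2) with hc | hc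
    · calc |y x - s x| ≤ 4*M*(x - t k) := b1
        _ ≤ 4*M*((t (k+1) - t k)/2) :=
          mul_le_mul_of_nonneg_left hc (by linarith only [hM0] : (0:ℝ) ≤ 4*M)
        _ ≤ 2*h*M := by
          have := mul_le_mul_of_nonneg_left hLh (by linarith only [hM0] : (0:ℝ) ≤ 2*M)
          linarith only [this]
    · calc |y x - s x| ≤ 4*M*(-(x - t (k+1))) := b2
        _ ≤ 4*M*((t (k+1) - t k)/2) :=
          mul_le_mul_of_nonneg_left (by linarith only [hc] : -(x - t (k+1)) ≤ (t (k+1) - t k)/2)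
            (by linarith only [hM0] : (0:ℝ) ≤ 4*M)
        _ ≤ 2*h*M := by
          have := mul_le_mul_of_nonneg_left hLh (by linarith only [hM0] : (0:ℝ) ≤ 2*M)
          linarith only [this]
end

section
/- Let b ∈ ℝ^n with β := max_i b_i < 0, let A be a nonzero n×n real matrix with operator norm ‖A‖ (with respect to the Euclidean norm), and let y : [0,∞) → ℝ^n be differentiable with y'(t) = diag(y(t))(b + A y(t)) for all t ≥ 0. If ‖y(0)‖_2 < −β/(2‖A‖), then ‖y(t)‖_2 ≤ ‖y(0)‖_2 · e^{βt/2} for all t ≥ 0; in particular y(t) → 0 as t → ∞, so the origin is an asymptotically stable equilibrium when all intrinsic growth rates are negative. -/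
open Set Filter

/-- if all intrinsic growth rates are negative (`β = max_i b_i < 0`) and the
initial condition satisfies `‖y(0)‖₂ < -β/(2‖A‖)`, then along any solution of the
Lotka–Volterra system `‖y(t)‖₂ ≤ ‖y(0)‖₂ e^{βt/2}` for all `t ≥ 0`; in particular
`y(t) → 0`, so the origin is asymptotically stable. -/
theorem lotkaVolterra_origin_asymptotically_stable
    (n : ℕ) (hn : 0 < n) (b : Fin n → ℝ) (β : ℝ)
    (hβ : β = Finset.univ.sup'
      (Finset.univ_nonempty_iff.mpr (Fin.pos_iff_nonempty.mp hn)) b)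
    (hβneg : β < 0)
    (A : Matrix (Fin n) (Fin n) ℝ) (hA : A ≠ 0)
    (y : ℝ → EuclideanSpace ℝ (Fin n))
    (hy : ∀ t : ℝ, 0 ≤ t →
      HasDerivWithinAt y
        ((WithLp.equiv 2 (Fin n → ℝ)).symm
          (fun i => y t i * (b i + ∑ j, A i j * y t j))) (Ici 0) t)
    (h0 : ‖y 0‖ < -β / (2 * ‖Matrix.toEuclideanCLM (𝕜 := ℝ) A‖)) :
    (∀ t : ℝ, 0 ≤ t → ‖y t‖ ≤ ‖y 0‖ * Real.exp (β * t / 2)) ∧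
    Tendsto y atTop (nhds 0) := by
  set C := ‖Matrix.toEuclideanCLM (𝕜 := ℝ) A‖ with hCdef
  have hCpos : 0 < C := by
    rw [hCdef, norm_pos_iff]
    intro h
    apply hA
    have := congrArg (Matrix.toEuclideanCLM (𝕜 := ℝ) (n := Fin n)).symm h
    simpa using this
  set c : ℝ := -β / (2 * C) with hcdef
  have hcpos : 0 < c := div_pos (by linarith) (by linarith)
  have hCc : C * c = -β / 2 := by
    rw [hcdef]; field_simp
  have ycont : ContinuousOn y (Ici 0) := fun t ht => (hy t ht).continuousWithinAt
  have coord_le : ∀ (v : EuclideanSpace ℝ (Fin n)) (i : Fin n), |v i| ≤ ‖v‖ := by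
    intro v i
    rw [EuclideanSpace.norm_eq, ← Real.sqrt_sq_eq_abs]
    apply Real.sqrt_le_sqrt
    have := Finset.single_le_sum (f := fun j => ‖v j‖ ^ 2) (fun j _ => sq_nonneg _)
      (Finset.mem_univ i)
    simpa [Real.norm_eq_abs, sq_abs] using this
  -- the vector field
  set D : ℝ → EuclideanSpace ℝ (Fin n) := fun t =>
    (WithLp.equiv 2 (Fin n → ℝ)).symm (fun i => y t i * (b i + ∑ j, A i j * y t j)) with hDdef
  set g : ℝ → ℝ := fun t => ‖y t‖ ^ 2 with hgdef
  -- key Gronwall estimate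
  have key : ∀ x T : ℝ, 0 ≤ x → (∀ s ∈ Icc x T, ‖y s‖ ≤ c) →
      ∀ t ∈ Icc x T, g t ≤ g x * Real.exp (β * (t - x)) := by
    intro x T hx hbdd
    have hIcc : Icc x T ⊆ Ici 0 := fun s hs => le_trans hx hs.1
    have hcont : ContinuousOn g (Icc x T) := ((ycont.mono hIcc).norm.pow 2)
    have H := le_gronwallBound_of_liminf_deriv_right_le (f := g)
      (f' := fun t => 2 * (inner ℝ (y t) (D t) : ℝ)) (δ := g x) (K := β) (ε := 0)
      (a := x) (b := T) hcont ?_ (le_refl _) ?_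
    · intro t ht
      have := H t ht
      rwa [gronwallBound_ε0] at this
    · -- slope condition
      intro s hs r hr
      have hd : HasDerivWithinAt g (2 * (inner ℝ (y s) (D s) : ℝ)) (Ici s) s :=
        ((hy s (le_trans hx hs.1)).norm_sq).mono (Ici_subset_Ici.mpr (le_trans hx hs.1))
      simpa [slope_def_field, div_eq_inv_mul] using hd.liminf_right_slope_le hr
    · -- the differential inequality
      intro s hs
      show 2 * (inner ℝ (y s) (D s) : ℝ) ≤ β * g s + 0
      rw [add_zero]
      have hys : ‖y s‖ ≤ c := hbdd s ⟨hs.1, le_of_lt hs.2⟩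
      set w := y s with hw
      set z := (Matrix.toEuclideanCLM (𝕜 := ℝ) A) w with hz
      have hzi : ∀ i, z i = ∑ j, A i j * w j := by
        intro i
        have h := congrFun (Matrix.ofLp_toEuclideanCLM (𝕜 := ℝ) A w) i
        exact h
      have hinner : (inner ℝ w (D s) : ℝ) = ∑ i, w i ^ 2 * (b i + z i) := by
        simp only [hDdef, PiLp.inner_apply, RCLike.inner_apply, starRingEnd_apply, star_trivial]
        refine Finset.sum_congr rfl fun i _ => ?_
        rw [hzi i]
        show (w i * (b i + ∑ j, A i j * w j)) * w i = _
        ring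
      have hnz : ‖z‖ ≤ C * ‖w‖ := (Matrix.toEuclideanCLM (𝕜 := ℝ) A).le_opNorm w
      have hterm : ∀ i, w i ^ 2 * (b i + z i) ≤ w i ^ 2 * (β / 2) := by
        intro i
        apply mul_le_mul_of_nonneg_left _ (sq_nonneg _)
        have hb : b i ≤ β := hβ ▸ Finset.le_sup' b (Finset.mem_univ i)
        have hzle : z i ≤ -β / 2 := by
          calc z i ≤ |z i| := le_abs_self _
            _ ≤ ‖z‖ := coord_le z i
            _ ≤ C * ‖w‖ := hnz
            _ ≤ C * c := by nlinarith
            _ = -β / 2 := hCc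
        linarith
      have hsum : (inner ℝ w (D s) : ℝ) ≤ (β / 2) * g s := by
        rw [hinner]
        calc ∑ i, w i ^ 2 * (b i + z i) ≤ ∑ i, w i ^ 2 * (β / 2) :=
              Finset.sum_le_sum fun i _ => hterm i
          _ = (β / 2) * ∑ i, w i ^ 2 := by rw [← Finset.sum_mul]; ring
          _ = (β / 2) * g s := by
              congr 1
              rw [hgdef]
              simp only [← hw]
              rw [← real_inner_self_eq_norm_sq]
              rw [PiLp.inner_apply]; simp [RCLike.inner_apply, sq]
      linarith
  -- main bound
  have main : ∀ t : ℝ, 0 ≤ t → ‖y t‖ ≤ ‖y 0‖ * Real.exp (β * t / 2) := by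
    intro T hT
    set s : Set ℝ := {t | ‖y t‖ ≤ ‖y 0‖ * Real.exp (β * t / 2)} with hsdef
    have hsub : Icc 0 T ⊆ s := by
      apply IsClosed.Icc_subset_of_forall_exists_gt
      · have heq : s ∩ Icc 0 T =
            Icc 0 T ∩ (fun t => ‖y t‖ - ‖y 0‖ * Real.exp (β * t / 2)) ⁻¹' Iic 0 := by
          ext t
          simp only [hsdef, mem_inter_iff, mem_setOf_eq, mem_preimage, mem_Iic, sub_nonpos]
          tauto
        rw [heq]
        apply ContinuousOn.preimage_isClosed_of_isClosed _ isClosed_Icc isClosed_Iic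
        apply ContinuousOn.sub
        · exact (ycont.mono (fun u hu => hu.1)).norm
        · exact (Continuous.continuousOn (by fun_prop))
      · show ‖y 0‖ ≤ ‖y 0‖ * Real.exp (β * 0 / 2)
        rw [mul_zero, zero_div, Real.exp_zero, mul_one]
      · rintro x ⟨hxs, hx0, hxT⟩ v hv
        have hexp1 : Real.exp (β * x / 2) ≤ 1 := by
          apply Real.exp_le_one_iff.mpr
          nlinarith
        have hyx : ‖y x‖ < c := by
          calc ‖y x‖ ≤ ‖y 0‖ * Real.exp (β * x / 2) := hxs
            _ ≤ ‖y 0‖ * 1 := mul_le_mul_of_nonneg_left hexp1 (norm_nonneg _)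
            _ = ‖y 0‖ := mul_one _
            _ < c := h0
        have hev : ∀ᶠ u in nhdsWithin x (Ici 0), ‖y u‖ < c :=
          ((ycont x hx0).norm).eventually_lt_const hyx
        rw [Filter.eventually_iff, Metric.mem_nhdsWithin_iff] at hev
        obtain ⟨δ, hδpos, hδ⟩ := hev
        set t := min v (x + δ / 2) with htdef
        have hxt : x < t := lt_min hv (by linarith)
        have hIccsub : ∀ u ∈ Icc x t, ‖y u‖ ≤ c := by
          intro u hu
          apply le_of_lt
          refine hδ ⟨?_, le_trans hx0 hu.1⟩
          rw [Metric.mem_ball, Real.dist_eq, abs_sub_lt_iff]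
          have h1 : u ≤ x + δ / 2 := le_trans hu.2 (min_le_right _ _)
          have h2 : x ≤ u := hu.1
          constructor <;> linarith
        have hk := key x t hx0 hIccsub t (right_mem_Icc.mpr (le_of_lt hxt))
        refine ⟨t, ?_, hxt, min_le_left _ _⟩
        show ‖y t‖ ≤ ‖y 0‖ * Real.exp (β * t / 2)
        have h2 : g t ≤ (‖y 0‖ * Real.exp (β * t / 2)) ^ 2 := by
          calc g t ≤ g x * Real.exp (β * (t - x)) := hk
            _ ≤ (‖y 0‖ * Real.exp (β * x / 2)) ^ 2 * Real.exp (β * (t - x)) := by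
                apply mul_le_mul_of_nonneg_right _ (Real.exp_pos _).le
                exact pow_le_pow_left₀ (norm_nonneg _) hxs 2
            _ = (‖y 0‖ * Real.exp (β * t / 2)) ^ 2 := by
                rw [mul_pow, mul_pow, ← Real.exp_nat_mul, ← Real.exp_nat_mul, mul_assoc,
                  ← Real.exp_add]
                congr 1
                push_cast
                ring
        exact le_of_pow_le_pow_left₀ two_ne_zero (by positivity) h2
    exact hsub (right_mem_Icc.mpr hT)
  refine ⟨main, ?_⟩
  apply squeeze_zero_norm'
  · filter_upwards [eventually_ge_atTop (0 : ℝ)] with t ht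
    exact main t ht
  · have hexp : Tendsto (fun t : ℝ => Real.exp (β * t / 2)) atTop (nhds 0) := by
      apply Real.tendsto_exp_atBot.comp
      apply (tendsto_div_const_atBot_of_pos (by norm_num : (0:ℝ) < 2)).mpr
      exact (tendsto_const_mul_atBot_of_neg hβneg).mpr tendsto_id
    have := hexp.const_mul (‖y 0‖)
    simpa using this
end

section
/- Let n ≥ 3 and let a = t_0 < t_1 < ⋯ < t_n = b be knots. If s and ŝ are two cubic splines on [a,b] with these knots that interpolate the same values, s(t_j) = ŝ(t_j) for j = 0,…,n, and both satisfy the not-a-knot boundary conditions (the third derivative of the spline is continuous across t_1 and across t_{n−1}, i.e., the cubic pieces on [t_0,t_1] and [t_1,t_2] coincide, and the cubic pieces on [t_{n−2},t_{n−1}] and [t_{n−1},t_n] coincide), then s(t) = ŝ(t) for all t ∈ [a,b]; that is, the not-a-knot cubic spline interpolant of given data is unique. -/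
open Set

open Set Polynomial Filter

lemma cubic_repr (q : Polynomial ℝ) (h : q.degree ≤ 3) (x : ℝ) :
    q.eval x = q.coeff 0 + q.coeff 1 * x + q.coeff 2 * x^2 + q.coeff 3 * x^3 ∧
    (Polynomial.derivative q).eval x = q.coeff 1 + 2*q.coeff 2*x + 3*q.coeff 3*x^2 ∧
    (Polynomial.derivative (Polynomial.derivative q)).eval x
      = 2*q.coeff 2 + 6*q.coeff 3*x := by
  have hnd : q.natDegree ≤ 3 := Polynomial.natDegree_le_iff_degree_le.mpr h
  have h1 : q.eval x = ∑ i ∈ Finset.range 4, q.coeff i * x ^ i :=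
    Polynomial.eval_eq_sum_range' (by omega) x
  have hd : (Polynomial.derivative q).natDegree ≤ 2 :=
    le_trans (Polynomial.natDegree_derivative_le q) (by omega)
  have h2 : (Polynomial.derivative q).eval x
      = ∑ i ∈ Finset.range 3, (Polynomial.derivative q).coeff i * x ^ i :=
    Polynomial.eval_eq_sum_range' (by omega) x
  have hdd : (Polynomial.derivative (Polynomial.derivative q)).natDegree ≤ 1 :=
    le_trans (Polynomial.natDegree_derivative_le _) (by omega)
  have h3 : (Polynomial.derivative (Polynomial.derivative q)).eval x
      = ∑ i ∈ Finset.range 2, (Polynomial.derivative (Polynomial.derivative q)).coeff i * x ^ i :=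
    Polynomial.eval_eq_sum_range' (by omega) x
  simp only [Finset.sum_range_succ, Finset.sum_range_zero, Polynomial.coeff_derivative] at h1 h2 h3
  push_cast at h2 h3
  refine ⟨by rw [h1]; ring, by rw [h2]; ring, by rw [h3]; ring⟩
open Set Polynomial Filter

lemma deriv_eq_on {f : ℝ → ℝ} {P : Polynomial ℝ} {U : Set ℝ} (hU : IsOpen U)
    (h : ∀ x ∈ U, f x = P.eval x) :
    ∀ x ∈ U, deriv f x = (Polynomial.derivative P).eval x := by
  intro x hx
  have hEv : f =ᶠ[nhds x] fun y => P.eval y :=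
    Filter.eventuallyEq_of_mem (hU.mem_nhds hx) h
  rw [hEv.deriv_eq, Polynomial.deriv]

lemma eval_lim {g : ℝ → ℝ} {Q : Polynomial ℝ} {τ : ℝ} {T : Set ℝ}
    (hne : (nhdsWithin τ T).NeBot) (hg : ContinuousAt g τ)
    (heq : ∀ x ∈ T, g x = Q.eval x) : g τ = Q.eval τ := by
  have h1 : Filter.Tendsto g (nhdsWithin τ T) (nhds (g τ)) :=
    hg.continuousWithinAt.tendsto
  have h2 : Filter.Tendsto g (nhdsWithin τ T) (nhds (Q.eval τ)) := by
    refine Filter.Tendsto.congr' ?_ ((Q.continuous.tendsto τ).mono_left nhdsWithin_le_nhds)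
    filter_upwards [self_mem_nhdsWithin] with x hx
    exact (heq x hx).symm
  exact tendsto_nhds_unique h1 h2

lemma side_match (f : ℝ → ℝ) (P Q : Polynomial ℝ) (u τ w : ℝ) (hu : u < τ) (hw : τ < w)
    (hfP : ∀ x ∈ Set.Ioo u τ, f x = P.eval x) (hfQ : ∀ x ∈ Set.Ioo τ w, f x = Q.eval x)
    (hc1 : ContinuousAt (deriv f) τ) (hc2 : ContinuousAt (deriv (deriv f)) τ) :
    (Polynomial.derivative P).eval τ = (Polynomial.derivative Q).eval τ ∧
    (Polynomial.derivative (Polynomial.derivative P)).eval τ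
      = (Polynomial.derivative (Polynomial.derivative Q)).eval τ := by
  have hneL : (nhdsWithin τ (Set.Ioo u τ)).NeBot := by
    rw [← mem_closure_iff_nhdsWithin_neBot, closure_Ioo hu.ne]
    exact right_mem_Icc.mpr hu.le
  have hneR : (nhdsWithin τ (Set.Ioo τ w)).NeBot := by
    rw [← mem_closure_iff_nhdsWithin_neBot, closure_Ioo hw.ne]
    exact left_mem_Icc.mpr hw.le
  have hdP := deriv_eq_on isOpen_Ioo hfP
  have hdQ := deriv_eq_on isOpen_Ioo hfQ
  have hdP2 := deriv_eq_on isOpen_Ioo hdP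
  have hdQ2 := deriv_eq_on isOpen_Ioo hdQ
  constructor
  · rw [← eval_lim hneL hc1 hdP, ← eval_lim hneR hc1 hdQ]
  · rw [← eval_lim hneL hc2 hdP2, ← eval_lim hneR hc2 hdQ2]

lemma piece_rel (A B C D u v : ℝ) (huv : u < v)
    (h0 : A + B*u + C*u^2 + D*u^3 = 0) (h1 : A + B*v + C*v^2 + D*v^3 = 0) :
    (v - u) * ((2*C + 6*D*u) + 2*(2*C + 6*D*v)) = 6*(B + 2*C*v + 3*D*v^2) ∧
    (v - u) * (2*(2*C + 6*D*u) + (2*C + 6*D*v)) = -(6*(B + 2*C*u + 3*D*u^2)) := by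
  have hne : v - u ≠ 0 := sub_ne_zero.mpr (ne_of_gt huv)
  constructor
  · have key : (v - u) * ((v - u) * ((2*C + 6*D*u) + 2*(2*C + 6*D*v))
        - 6*(B + 2*C*v + 3*D*v^2)) = 0 := by linear_combination 6*h0 - 6*h1
    have := (mul_eq_zero.mp key).resolve_left hne
    linarith
  · have key : (v - u) * ((v - u) * (2*(2*C + 6*D*u) + (2*C + 6*D*v))
        + 6*(B + 2*C*u + 3*D*u^2)) = 0 := by linear_combination 6*h1 - 6*h0
    have := (mul_eq_zero.mp key).resolve_left hne
    linarith

lemma threeroot (A B C D u v w : ℝ) (huv : u < v) (hvw : v < w)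
    (h0 : A + B*u + C*u^2 + D*u^3 = 0) (h1 : A + B*v + C*v^2 + D*v^3 = 0)
    (h2 : A + B*w + C*w^2 + D*w^3 = 0) :
    C = -D*(u+v+w) := by
  have hne1 : v - u ≠ 0 := sub_ne_zero.mpr (ne_of_gt huv)
  have hne2 : w - v ≠ 0 := sub_ne_zero.mpr (ne_of_gt hvw)
  have hne3 : w - u ≠ 0 := sub_ne_zero.mpr (ne_of_gt (huv.trans hvw))
  have k1 : B + C*(u+v) + D*(u^2+u*v+v^2) = 0 := by
    have key : (v - u) * (B + C*(u+v) + D*(u^2+u*v+v^2)) = 0 := by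
      linear_combination h1 - h0
    exact (mul_eq_zero.mp key).resolve_left hne1
  have k2 : B + C*(v+w) + D*(v^2+v*w+w^2) = 0 := by
    have key : (w - v) * (B + C*(v+w) + D*(v^2+v*w+w^2)) = 0 := by
      linear_combination h2 - h1
    exact (mul_eq_zero.mp key).resolve_left hne2
  have k3 : (w - u) * (C + D*(u+v+w)) = 0 := by linear_combination k2 - k1
  have := (mul_eq_zero.mp k3).resolve_left hne3
  linarith

lemma tri_max (N : ℕ) (h m : ℕ → ℝ) (hpos : ∀ j < N + 3, 0 < h j)
    (heq : ∀ j, 1 ≤ j → j ≤ N →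
      h j * (m j + 2 * m (j+1)) + h (j+1) * (2 * m (j+1) + m (j+2)) = 0)
    (hl : (h 0 + 2 * h 1) * m 1 = (h 0 - h 1) * m 2)
    (hr : (2 * h (N+1) + h (N+2)) * m (N+2) = (h (N+2) - h (N+1)) * m (N+1)) :
    ∀ i, 1 ≤ i → i ≤ N + 2 → m i = 0 := by
  classical
  obtain ⟨k, hk, hmax⟩ := Finset.exists_max_image (Finset.Icc 1 (N+2)) (fun i => |m i|)
    ⟨1, by simp⟩
  simp only [Finset.mem_Icc] at hk
  have hmax' : ∀ i, 1 ≤ i → i ≤ N + 2 → |m i| ≤ |m k| := by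
    intro i h1 h2
    exact hmax i (Finset.mem_Icc.mpr ⟨h1, h2⟩)
  have hkzero : m k = 0 := by
    rcases eq_or_ne k 1 with rfl | hk1
    · have hb : |m 2| ≤ |m 1| := hmax' 2 (by omega) (by omega)
      have h0 := hpos 0 (by omega)
      have h1 := hpos 1 (by omega)
      have e : (h 0 + 2 * h 1) * |m 1| = |h 0 - h 1| * |m 2| := by
        rw [← abs_of_pos (show (0:ℝ) < h 0 + 2 * h 1 by linarith), ← abs_mul, hl, abs_mul]
      have hlt : |h 0 - h 1| < h 0 + 2 * h 1 := abs_lt.mpr ⟨by linarith, by linarith⟩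
      have t1 : (h 0 + 2 * h 1) * |m 1| ≤ |h 0 - h 1| * |m 1| :=
        e ▸ mul_le_mul_of_nonneg_left hb (abs_nonneg _)
      have habs : |m 1| ≤ 0 := by
        by_contra hc
        push_neg at hc
        have := mul_lt_mul_of_pos_right hlt hc
        linarith
      exact abs_eq_zero.mp (le_antisymm habs (abs_nonneg _))
    rcases eq_or_ne k (N+2) with rfl | hk2
    · have hb : |m (N+1)| ≤ |m (N+2)| := hmax' (N+1) (by omega) (by omega)
      have h0 := hpos (N+1) (by omega)
      have h1 := hpos (N+2) (by omega)
      have e : (2 * h (N+1) + h (N+2)) * |m (N+2)| = |h (N+2) - h (N+1)| * |m (N+1)| := by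
        rw [← abs_of_pos (show (0:ℝ) < 2 * h (N+1) + h (N+2) by linarith), ← abs_mul, hr,
          abs_mul]
      have hlt : |h (N+2) - h (N+1)| < 2 * h (N+1) + h (N+2) :=
        abs_lt.mpr ⟨by linarith, by linarith⟩
      have t1 : (2 * h (N+1) + h (N+2)) * |m (N+2)| ≤ |h (N+2) - h (N+1)| * |m (N+2)| :=
        e ▸ mul_le_mul_of_nonneg_left hb (abs_nonneg _)
      have habs : |m (N+2)| ≤ 0 := by
        by_contra hc
        push_neg at hc
        have := mul_lt_mul_of_pos_right hlt hc
        linarith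
      exact abs_eq_zero.mp (le_antisymm habs (abs_nonneg _))
    · obtain ⟨j, rfl⟩ : ∃ j, k = j + 1 := ⟨k - 1, by omega⟩
      have e := heq j (by omega) (by omega)
      have hA := hpos j (by omega)
      have hB := hpos (j+1) (by omega)
      have hbl : |m j| ≤ |m (j+1)| := hmax' j (by omega) (by omega)
      have hbr : |m (j+2)| ≤ |m (j+1)| := hmax' (j+2) (by omega) (by omega)
      have e2 : 2 * (h j + h (j+1)) * |m (j+1)| = |h j * m j + h (j+1) * m (j+2)| := by
        rw [show h j * m j + h (j+1) * m (j+2) = -(2*(h j + h (j+1)) * m (j+1)) by linarith,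
          abs_neg, abs_mul, abs_of_pos (show (0:ℝ) < 2*(h j + h (j+1)) by linarith)]
      have e3 : |h j * m j + h (j+1) * m (j+2)| ≤ h j * |m j| + h (j+1) * |m (j+2)| := by
        refine (abs_add_le _ _).trans ?_
        rw [abs_mul, abs_mul, abs_of_pos hA, abs_of_pos hB]
      have t1 : h j * |m j| ≤ h j * |m (j+1)| := mul_le_mul_of_nonneg_left hbl hA.le
      have t2 : h (j+1) * |m (j+2)| ≤ h (j+1) * |m (j+1)| := mul_le_mul_of_nonneg_left hbr hB.le
      have habs : |m (j+1)| ≤ 0 := by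
        by_contra hc
        push_neg at hc
        nlinarith
      exact abs_eq_zero.mp (le_antisymm habs (abs_nonneg _))
  intro i h1 h2
  have := hmax' i h1 h2
  rw [hkzero] at this
  simpa using abs_eq_zero.mp (le_antisymm (by simpa using this) (abs_nonneg _))


/-- uniqueness of the not-a-knot cubic spline interpolant. Two cubic splines
with the same knots `t_0 < ⋯ < t_n` (`n ≥ 3`) interpolating the same values and both
satisfying the not-a-knot boundary conditions (the cubic pieces on `[t_0,t_1]`, `[t_1,t_2]`
coincide, and those on `[t_{n−2},t_{n−1}]`, `[t_{n−1},t_n]` coincide) agree on `[a,b]`. -/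
theorem notaknot_cubic_spline_interpolant_unique
    (a b : ℝ) (n : ℕ) (hn : 3 ≤ n) (t : ℕ → ℝ)
    (ht0 : t 0 = a) (htn : t n = b)
    (htmono : ∀ k, k < n → t k < t (k + 1))
    (s z : ℝ → ℝ) (p r : ℕ → Polynomial ℝ)
    (hs2 : ContDiffOn ℝ 2 s (Icc a b)) (hz2 : ContDiffOn ℝ 2 z (Icc a b))
    (hdeg : ∀ j < n, (p j).degree ≤ 3) (hdeg' : ∀ j < n, (r j).degree ≤ 3)
    (hsp : ∀ j < n, ∀ x ∈ Icc (t j) (t (j + 1)), s x = (p j).eval x)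
    (hzp : ∀ j < n, ∀ x ∈ Icc (t j) (t (j + 1)), z x = (r j).eval x)
    (hinterp : ∀ j ≤ n, s (t j) = z (t j))
    (hnak₁ : p 0 = p 1) (hnak₁' : r 0 = r 1)
    (hnak₂ : p (n - 2) = p (n - 1)) (hnak₂' : r (n - 2) = r (n - 1)) :
    ∀ x ∈ Icc a b, s x = z x := by
  classical
  obtain ⟨N, rfl⟩ : ∃ N, n = N + 3 := ⟨n - 3, by omega⟩
  have e1 : N + 3 - 2 = N + 1 := by omega
  have e2 : N + 3 - 1 = N + 2 := by omega
  rw [e1, e2] at hnak₂ hnak₂'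
  -- monotonicity
  have tlt : ∀ i j : ℕ, i < j → j ≤ N + 3 → t i < t j := by
    intro i j
    induction j with
    | zero => omega
    | succ k ih =>
      intro hij hk
      rcases Nat.lt_or_ge i k with h | h
      · exact (ih h (by omega)).trans (htmono k (by omega))
      · have hik : i = k := by omega
        subst hik
        exact htmono i (by omega)
  have tle : ∀ i j : ℕ, i ≤ j → j ≤ N + 3 → t i ≤ t j := by
    intro i j hij hj
    rcases eq_or_lt_of_le hij with rfl | h
    · exact le_refl _
    · exact (tlt i j h hj).le
  -- roots of q j := p j - r j
  have hqdeg : ∀ j, j < N + 3 → (p j - r j).degree ≤ 3 := fun j hj =>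
    (Polynomial.degree_sub_le _ _).trans (max_le (hdeg j hj) (hdeg' j hj))
  have F0 : ∀ j, j < N + 3 → (p j - r j).eval (t j) = 0 ∧ (p j - r j).eval (t (j+1)) = 0 := by
    intro j hj
    have m1 : t j ∈ Icc (t j) (t (j+1)) := left_mem_Icc.mpr (tle j (j+1) (by omega) (by omega))
    have m2 : t (j+1) ∈ Icc (t j) (t (j+1)) :=
      right_mem_Icc.mpr (tle j (j+1) (by omega) (by omega))
    have a1 := hsp j hj (t j) m1
    have a2 := hzp j hj (t j) m1
    have a3 := hsp j hj (t (j+1)) m2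
    have a4 := hzp j hj (t (j+1)) m2
    have b1 := hinterp j (by omega)
    have b2 := hinterp (j+1) (by omega)
    constructor <;> rw [Polynomial.eval_sub] <;> linarith
  -- C¹ and C² matching at interior knots
  have hab : a < b := by rw [← ht0, ← htn]; exact tlt 0 (N+3) (by omega) le_rfl
  have hs' : ContDiffOn ℝ 2 s (Set.Ioo a b) := hs2.mono Set.Ioo_subset_Icc_self
  have hz' : ContDiffOn ℝ 2 z (Set.Ioo a b) := hz2.mono Set.Ioo_subset_Icc_self
  have hsd : ContDiffOn ℝ 1 (deriv s) (Set.Ioo a b) :=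
    hs'.deriv_of_isOpen isOpen_Ioo (by norm_num)
  have hzd : ContDiffOn ℝ 1 (deriv z) (Set.Ioo a b) :=
    hz'.deriv_of_isOpen isOpen_Ioo (by norm_num)
  have F1 : ∀ j, j + 1 < N + 3 →
      (Polynomial.derivative (p j - r j)).eval (t (j+1))
        = (Polynomial.derivative (p (j+1) - r (j+1))).eval (t (j+1)) ∧
      (Polynomial.derivative (Polynomial.derivative (p j - r j))).eval (t (j+1))
        = (Polynomial.derivative (Polynomial.derivative (p (j+1) - r (j+1)))).eval (t (j+1)) := by
    intro j hj
    have hτab : t (j+1) ∈ Set.Ioo a b :=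
      ⟨by rw [← ht0]; exact tlt 0 (j+1) (by omega) (by omega),
       by rw [← htn]; exact tlt (j+1) (N+3) (by omega) le_rfl⟩
    have hmem : Set.Ioo a b ∈ nhds (t (j+1)) := isOpen_Ioo.mem_nhds hτab
    have hc1s : ContinuousAt (deriv s) (t (j+1)) := hsd.continuousOn.continuousAt hmem
    have hc2s : ContinuousAt (deriv (deriv s)) (t (j+1)) :=
      (hsd.continuousOn_deriv_of_isOpen isOpen_Ioo le_rfl).continuousAt hmem
    have hc1z : ContinuousAt (deriv z) (t (j+1)) := hzd.continuousOn.continuousAt hmem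
    have hc2z : ContinuousAt (deriv (deriv z)) (t (j+1)) :=
      (hzd.continuousOn_deriv_of_isOpen isOpen_Ioo le_rfl).continuousAt hmem
    have hPs : ∀ x ∈ Set.Ioo (t j) (t (j+1)), s x = (p j).eval x := fun x hx =>
      hsp j (by omega) x (Set.Ioo_subset_Icc_self hx)
    have hQs : ∀ x ∈ Set.Ioo (t (j+1)) (t (j+2)), s x = (p (j+1)).eval x := fun x hx =>
      hsp (j+1) (by omega) x (Set.Ioo_subset_Icc_self hx)
    have hPz : ∀ x ∈ Set.Ioo (t j) (t (j+1)), z x = (r j).eval x := fun x hx =>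
      hzp j (by omega) x (Set.Ioo_subset_Icc_self hx)
    have hQz : ∀ x ∈ Set.Ioo (t (j+1)) (t (j+2)), z x = (r (j+1)).eval x := fun x hx =>
      hzp (j+1) (by omega) x (Set.Ioo_subset_Icc_self hx)
    have Ms := side_match s (p j) (p (j+1)) (t j) (t (j+1)) (t (j+2))
      (htmono j (by omega)) (htmono (j+1) (by omega)) hPs hQs hc1s hc2s
    have Mz := side_match z (r j) (r (j+1)) (t j) (t (j+1)) (t (j+2))
      (htmono j (by omega)) (htmono (j+1) (by omega)) hPz hQz hc1z hc2z
    constructor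
    · simp only [Polynomial.derivative_sub, Polynomial.eval_sub]
      rw [Ms.1, Mz.1]
    · simp only [Polynomial.derivative_sub, Polynomial.eval_sub]
      rw [Ms.2, Mz.2]
  -- per-piece identities
  have F2 : ∀ j, j < N + 3 →
      (t (j+1) - t j) *
        ((Polynomial.derivative (Polynomial.derivative (p j - r j))).eval (t j)
          + 2 * (Polynomial.derivative (Polynomial.derivative (p j - r j))).eval (t (j+1)))
        = 6 * (Polynomial.derivative (p j - r j)).eval (t (j+1)) ∧
      (t (j+1) - t j) *
        (2 * (Polynomial.derivative (Polynomial.derivative (p j - r j))).eval (t j)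
          + (Polynomial.derivative (Polynomial.derivative (p j - r j))).eval (t (j+1)))
        = -(6 * (Polynomial.derivative (p j - r j)).eval (t j)) := by
    intro j hj
    have r1 := cubic_repr (p j - r j) (hqdeg j hj) (t j)
    have r2 := cubic_repr (p j - r j) (hqdeg j hj) (t (j+1))
    have h0 : (p j - r j).coeff 0 + (p j - r j).coeff 1 * t j + (p j - r j).coeff 2 * (t j)^2
        + (p j - r j).coeff 3 * (t j)^3 = 0 := by rw [← r1.1]; exact (F0 j hj).1
    have h1 : (p j - r j).coeff 0 + (p j - r j).coeff 1 * t (j+1)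
        + (p j - r j).coeff 2 * (t (j+1))^2 + (p j - r j).coeff 3 * (t (j+1))^3 = 0 := by
      rw [← r2.1]; exact (F0 j hj).2
    have PR := piece_rel _ _ _ _ _ _ (htmono j hj) h0 h1
    constructor
    · rw [r1.2.2, r2.2.2, r2.2.1]; exact PR.1
    · rw [r1.2.2, r2.2.2, r1.2.1]; exact PR.2
  -- the second-derivative knot values vanish
  have mz : ∀ i, 1 ≤ i → i ≤ N + 2 →
      (Polynomial.derivative (Polynomial.derivative (p i - r i))).eval (t i) = 0 := by
    apply tri_max N (fun j => t (j+1) - t j)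
      (fun i => (Polynomial.derivative (Polynomial.derivative (p i - r i))).eval (t i))
    · exact fun j hj => sub_pos.mpr (htmono j hj)
    · intro j hj1 hjN
      have A := (F2 j (by omega)).1
      have B := (F2 (j+1) (by omega)).2
      have C1 := (F1 j (by omega)).1
      have C2 := (F1 j (by omega)).2
      have C3 := (F1 (j+1) (by omega)).2
      rw [C2, C1] at A
      rw [C3] at B
      linear_combination A + B
    · have hq01 : p 1 - r 1 = p 0 - r 0 := by rw [hnak₁, hnak₁']
      have r0 := cubic_repr (p 1 - r 1) (hqdeg 1 (by omega)) (t 0)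
      have r1 := cubic_repr (p 1 - r 1) (hqdeg 1 (by omega)) (t 1)
      have r2 := cubic_repr (p 1 - r 1) (hqdeg 1 (by omega)) (t 2)
      have h0 : (p 1 - r 1).coeff 0 + (p 1 - r 1).coeff 1 * t 0
          + (p 1 - r 1).coeff 2 * (t 0)^2 + (p 1 - r 1).coeff 3 * (t 0)^3 = 0 := by
        rw [← r0.1, hq01]; exact (F0 0 (by omega)).1
      have h1 : (p 1 - r 1).coeff 0 + (p 1 - r 1).coeff 1 * t 1
          + (p 1 - r 1).coeff 2 * (t 1)^2 + (p 1 - r 1).coeff 3 * (t 1)^3 = 0 := by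
        rw [← r1.1]; exact (F0 1 (by omega)).1
      have h2 : (p 1 - r 1).coeff 0 + (p 1 - r 1).coeff 1 * t 2
          + (p 1 - r 1).coeff 2 * (t 2)^2 + (p 1 - r 1).coeff 3 * (t 2)^3 = 0 := by
        rw [← r2.1]; exact (F0 1 (by omega)).2
      have TR := threeroot _ _ _ _ _ _ _ (htmono 0 (by omega)) (htmono 1 (by omega)) h0 h1 h2
      rw [← (F1 1 (by omega)).2]
      rw [r1.2.2, r2.2.2]
      linear_combination (6*(t 2 - t 1))*TR
    · have hqlast : (p (N+1) - r (N+1)).eval (t (N+3)) = 0 := by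
        rw [hnak₂, hnak₂']; exact (F0 (N+2) (by omega)).2
      have r0 := cubic_repr (p (N+1) - r (N+1)) (hqdeg (N+1) (by omega)) (t (N+1))
      have r1 := cubic_repr (p (N+1) - r (N+1)) (hqdeg (N+1) (by omega)) (t (N+2))
      have r2 := cubic_repr (p (N+1) - r (N+1)) (hqdeg (N+1) (by omega)) (t (N+3))
      have h0 : (p (N+1) - r (N+1)).coeff 0 + (p (N+1) - r (N+1)).coeff 1 * t (N+1)
          + (p (N+1) - r (N+1)).coeff 2 * (t (N+1))^2
          + (p (N+1) - r (N+1)).coeff 3 * (t (N+1))^3 = 0 := by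
        rw [← r0.1]; exact (F0 (N+1) (by omega)).1
      have h1 : (p (N+1) - r (N+1)).coeff 0 + (p (N+1) - r (N+1)).coeff 1 * t (N+2)
          + (p (N+1) - r (N+1)).coeff 2 * (t (N+2))^2
          + (p (N+1) - r (N+1)).coeff 3 * (t (N+2))^3 = 0 := by
        rw [← r1.1]; exact (F0 (N+1) (by omega)).2
      have h2 : (p (N+1) - r (N+1)).coeff 0 + (p (N+1) - r (N+1)).coeff 1 * t (N+3)
          + (p (N+1) - r (N+1)).coeff 2 * (t (N+3))^2
          + (p (N+1) - r (N+1)).coeff 3 * (t (N+3))^3 = 0 := by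
        rw [← r2.1]; exact hqlast
      have TR := threeroot _ _ _ _ _ _ _ (htmono (N+1) (by omega)) (htmono (N+2) (by omega))
        h0 h1 h2
      rw [← (F1 (N+1) (by omega)).2]
      rw [r0.2.2, r1.2.2]
      linear_combination (6*(t (N+2) - t (N+1)))*TR
  -- middle pieces vanish identically
  have qmid : ∀ j, 1 ≤ j → j ≤ N + 1 → ∀ x, (p j - r j).eval x = 0 := by
    intro j h1 h2 x
    have r1 := cubic_repr (p j - r j) (hqdeg j (by omega)) (t j)
    have r2 := cubic_repr (p j - r j) (hqdeg j (by omega)) (t (j+1))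
    have rx := cubic_repr (p j - r j) (hqdeg j (by omega)) x
    have s1 : 2*(p j - r j).coeff 2 + 6*(p j - r j).coeff 3 * t j = 0 := by
      rw [← r1.2.2]; exact mz j h1 (by omega)
    have s2 : 2*(p j - r j).coeff 2 + 6*(p j - r j).coeff 3 * t (j+1) = 0 := by
      rw [← r2.2.2, (F1 j (by omega)).2]; exact mz (j+1) (by omega) (by omega)
    have hΔ : (0:ℝ) < t (j+1) - t j := sub_pos.mpr (htmono j (by omega))
    have hD : (p j - r j).coeff 3 = 0 := by
      have h6 : (6*(t (j+1) - t j)) * (p j - r j).coeff 3 = 0 := by linear_combination s2 - s1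
      rcases mul_eq_zero.mp h6 with h | h
      · exfalso; linarith
      · exact h
    have hC : (p j - r j).coeff 2 = 0 := by rw [hD] at s1; linarith
    have e1 : (p j - r j).coeff 0 + (p j - r j).coeff 1 * t j + (p j - r j).coeff 2 * (t j)^2
        + (p j - r j).coeff 3 * (t j)^3 = 0 := by rw [← r1.1]; exact (F0 j (by omega)).1
    have e2 : (p j - r j).coeff 0 + (p j - r j).coeff 1 * t (j+1)
        + (p j - r j).coeff 2 * (t (j+1))^2 + (p j - r j).coeff 3 * (t (j+1))^3 = 0 := by
      rw [← r2.1]; exact (F0 j (by omega)).2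
    rw [hC, hD] at e1 e2
    have hB : (p j - r j).coeff 1 = 0 := by
      have h6 : (t (j+1) - t j) * (p j - r j).coeff 1 = 0 := by linear_combination e2 - e1
      rcases mul_eq_zero.mp h6 with h | h
      · exfalso; linarith
      · exact h
    have hA : (p j - r j).coeff 0 = 0 := by rw [hB] at e1; linarith
    rw [rx.1, hA, hB, hC, hD]
    ring
  have qzero : ∀ j, j < N + 3 → ∀ x, (p j - r j).eval x = 0 := by
    intro j hj x
    rcases Nat.eq_zero_or_pos j with rfl | hj1
    · rw [hnak₁, hnak₁']
      exact qmid 1 (by omega) (by omega) x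
    rcases eq_or_ne j (N+2) with rfl | hj2
    · rw [← hnak₂, ← hnak₂']
      exact qmid (N+1) (by omega) (by omega) x
    · exact qmid j (by omega) (by omega) x
  -- locate x in a subinterval and conclude
  intro x hx
  have hfind : ∃ j, j < N + 3 ∧ x ∈ Set.Icc (t j) (t (j+1)) := by
    by_cases hxb : x = b
    · refine ⟨N+2, by omega, ?_⟩
      subst hxb
      constructor
      · rw [← htn]; exact tle (N+2) (N+3) (by omega) le_rfl
      · rw [show (N+2)+1 = N+3 from rfl, htn]
    · have hxb' : x < b := lt_of_le_of_ne hx.2 hxb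
      have hP0 : t 0 ≤ x := by rw [ht0]; exact hx.1
      have hspec : t (Nat.findGreatest (fun j => t j ≤ x) (N+3)) ≤ x := by
        simpa using Nat.findGreatest_spec (P := fun j => t j ≤ x) (Nat.zero_le (N+3)) hP0
      have hj0le : Nat.findGreatest (fun j => t j ≤ x) (N+3) ≤ N + 3 := Nat.findGreatest_le _
      have hj0lt : Nat.findGreatest (fun j => t j ≤ x) (N+3) < N + 3 := by
        rcases eq_or_lt_of_le hj0le with he | h
        · exfalso; rw [he, htn] at hspec; linarith
        · exact h
      have hgt : ¬ (t (Nat.findGreatest (fun j => t j ≤ x) (N+3) + 1) ≤ x) := by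
        simpa using Nat.findGreatest_is_greatest (P := fun j => t j ≤ x) (n := N+3)
          (k := Nat.findGreatest (fun j => t j ≤ x) (N+3) + 1) (by omega) (by omega)
      exact ⟨_, hj0lt, hspec, le_of_not_ge hgt⟩
  obtain ⟨j, hj, hxj⟩ := hfind
  have ev1 := hsp j hj x hxj
  have ev2 := hzp j hj x hxj
  have ev3 := qzero j hj x
  rw [Polynomial.eval_sub] at ev3
  rw [ev1, ev2]
  linarith
end
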